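/- arXiv:1207.3069 — 5 statements merged into one kernel-verified Lean document; each statement's English description precedes it below -/
import Mathlib

section
/- Fix n ≥ 1 and let T ≤ Sp(2n,ℤ) be the subgroup generated by the matrices R_1,…,R_n, where R_i sends a_i ↦ −b_i, b_i ↦ a_i − b_i and fixes the other basis vectors. Then for every prime p and every e ≥ 1, the restriction to T of the reduction homomorphism Sp(2n,ℤ) → Sp(2n, ℤ/p^eℤ) is injective, and every nontrivial element of T maps to a noncentral element of Sp(2n, ℤ/p^eℤ). -/
/-- The symplectic transformation `R i` sending `a_i ↦ -b_i`, `b_i ↦ a_i - b_i`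
and fixing all other basis vectors, where `a_i = e (Sum.inl i)` and
`b_i = e (Sum.inr i)` are the standard basis vectors of `ℤ^(2n)`. -/
def Rmat (n : ℕ) (i : Fin n) : Matrix (Fin n ⊕ Fin n) (Fin n ⊕ Fin n) ℤ :=
  Matrix.of fun r c =>
    match r, c with
    | Sum.inl k, Sum.inl l => if k = l ∧ k ≠ i then 1 else 0
    | Sum.inl k, Sum.inr l => if k = i ∧ l = i then 1 else 0
    | Sum.inr k, Sum.inl l => if k = i ∧ l = i then -1 else 0
    | Sum.inr k, Sum.inr l => if k = l then (if k = i then -1 else 1) else 0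

/-- Entrywise reduction of symplectic groups along a ring homomorphism. -/
def sympMap {l : Type*} [DecidableEq l] [Fintype l] {R S : Type*} [CommRing R] [CommRing S]
    (f : R →+* S) : Matrix.symplecticGroup l R →* Matrix.symplecticGroup l S where
  toFun M := ⟨(M : Matrix (l ⊕ l) (l ⊕ l) R).map f, by
    have h := M.2
    rw [SymplecticGroup.mem_iff] at h ⊢
    have hJ : (Matrix.J l R).map f = Matrix.J l S := by
      ext i j
      cases i <;> cases j <;>
        simp [Matrix.J, Matrix.map_apply, Matrix.one_apply, apply_ite f]
    rw [← hJ, ← Matrix.transpose_map, ← Matrix.map_mul, ← Matrix.map_mul, h]⟩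
  map_one' := Subtype.ext (Matrix.map_one _ f.map_zero f.map_one)
  map_mul' M N := Subtype.ext (Matrix.map_mul)


def wEnt (c : ZMod 3) (r s : Fin 2) : ℤ :=
  if c = 0 then (if r = s then 1 else 0)
  else if c = 1 then
    (if r = 0 then (if s = 0 then 0 else 1) else (if s = 0 then -1 else -1))
  else (if r = 0 then (if s = 0 then -1 else -1) else (if s = 0 then 1 else 0))

def Bmat (n : ℕ) (f : Fin n → ZMod 3) : Matrix (Fin n ⊕ Fin n) (Fin n ⊕ Fin n) ℤ :=
  Matrix.of fun r c =>
    match r, c with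
    | Sum.inl k, Sum.inl l => if k = l then wEnt (f k) 0 0 else 0
    | Sum.inl k, Sum.inr l => if k = l then wEnt (f k) 0 1 else 0
    | Sum.inr k, Sum.inl l => if k = l then wEnt (f k) 1 0 else 0
    | Sum.inr k, Sum.inr l => if k = l then wEnt (f k) 1 1 else 0

lemma wEnt_mul : ∀ (c d : ZMod 3) (r s : Fin 2),
    wEnt c r 0 * wEnt d 0 s + wEnt c r 1 * wEnt d 1 s = wEnt (c + d) r s := by decide

lemma Bmat_zero (n : ℕ) : Bmat n 0 = 1 := by
  ext r c
  cases r <;> cases c <;>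
    simp [Bmat, wEnt, Matrix.one_apply]

lemma Bmat_mul (n : ℕ) (f g : Fin n → ZMod 3) : Bmat n f * Bmat n g = Bmat n (f + g) := by
  ext r c
  rw [Matrix.mul_apply, Fintype.sum_sum_type]
  cases r <;> cases c <;>
  · rename_i k l
    simp only [Bmat, Matrix.of_apply, ite_mul, zero_mul, Finset.sum_ite_eq,
      Finset.mem_univ, if_true, Pi.add_apply]
    split_ifs with hkl
    · subst hkl; exact wEnt_mul ..
    · simp

lemma Rmat_eq_Bmat (n : ℕ) (i : Fin n) :
    Rmat n i = Bmat n (fun k => if k = i then 1 else 0) := by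
  have h10 : (1 : ZMod 3) ≠ 0 := by decide
  ext r c
  cases r <;> cases c <;>
  · rename_i k l
    simp only [Rmat, Bmat, Matrix.of_apply]
    by_cases hkl : k = l <;> by_cases hki : k = i <;> by_cases hli : l = i <;>
      simp_all [wEnt, h10]

lemma mul_J_apply {R : Type*} [CommRing R] {m : ℕ}
    (C : Matrix (Fin m ⊕ Fin m) (Fin m ⊕ Fin m) R) (i : Fin m) :
    (C * Matrix.J (Fin m) R) (Sum.inl i) (Sum.inr i) = -C (Sum.inl i) (Sum.inl i) := by
  rw [Matrix.mul_apply, Fintype.sum_sum_type]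
  simp [Matrix.J, Matrix.one_apply, mul_ite, Finset.sum_ite_eq']

lemma J_mul_apply {R : Type*} [CommRing R] {m : ℕ}
    (C : Matrix (Fin m ⊕ Fin m) (Fin m ⊕ Fin m) R) (i : Fin m) :
    (Matrix.J (Fin m) R * C) (Sum.inl i) (Sum.inr i) = -C (Sum.inr i) (Sum.inr i) := by
  rw [Matrix.mul_apply, Fintype.sum_sum_type]
  simp [Matrix.J, Matrix.one_apply, ite_mul, Finset.sum_ite_eq]

/-- The reduction `Sp(2n,ℤ) → Sp(2n, ℤ/p^eℤ)` is injective on the subgroup `T`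
generated by `R₁,…,Rₙ`, and sends every nontrivial element of `T` to a
noncentral element of `Sp(2n, ℤ/p^eℤ)`. -/
theorem Rmat_subgroup_reduction_injective_noncentral (n : ℕ) (hn : 1 ≤ n)
    (h : ∀ i : Fin n, Rmat n i ∈ Matrix.symplecticGroup (Fin n) ℤ)
    (p e : ℕ) (hp : p.Prime) (he : 1 ≤ e)
    (T : Subgroup (Matrix.symplecticGroup (Fin n) ℤ))
    (hT : T = Subgroup.closure
      (Set.range fun i : Fin n =>
        (⟨Rmat n i, h i⟩ : Matrix.symplecticGroup (Fin n) ℤ))) :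
    Set.InjOn (sympMap (Int.castRingHom (ZMod (p ^ e))))
        (T : Set (Matrix.symplecticGroup (Fin n) ℤ)) ∧
    ∀ x : Matrix.symplecticGroup (Fin n) ℤ, x ∈ T → x ≠ 1 →
      sympMap (Int.castRingHom (ZMod (p ^ e))) x ∉
        Subgroup.center (Matrix.symplecticGroup (Fin n) (ZMod (p ^ e))) := by
  haveI : Fact (1 < p ^ e) := ⟨Nat.one_lt_pow (by omega) hp.one_lt⟩
  have hrep : ∀ x : Matrix.symplecticGroup (Fin n) ℤ, x ∈ T →
      ∃ f : Fin n → ZMod 3,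
        (x : Matrix (Fin n ⊕ Fin n) (Fin n ⊕ Fin n) ℤ) = Bmat n f := by
    intro x hx
    rw [hT] at hx
    induction hx using Subgroup.closure_induction with
    | mem x hx =>
        obtain ⟨i, rfl⟩ := hx
        exact ⟨_, Rmat_eq_Bmat n i⟩
    | one => exact ⟨0, by rw [Bmat_zero]; rfl⟩
    | mul x y hx hy ihx ihy =>
        obtain ⟨f, hf⟩ := ihx; obtain ⟨g, hg⟩ := ihy
        exact ⟨f + g, by rw [MulMemClass.coe_mul, hf, hg, Bmat_mul]⟩
    | inv x hx ih =>
        obtain ⟨f, hf⟩ := ih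
        refine ⟨-f, ?_⟩
        have h1 : (x : Matrix (Fin n ⊕ Fin n) (Fin n ⊕ Fin n) ℤ) * Bmat n (-f) = 1 := by
          rw [hf, Bmat_mul, add_neg_cancel, Bmat_zero]
        calc (↑x⁻¹ : Matrix (Fin n ⊕ Fin n) (Fin n ⊕ Fin n) ℤ)
            = ↑x⁻¹ * (↑x * Bmat n (-f)) := by rw [h1, mul_one]
          _ = ↑(x⁻¹ * x) * Bmat n (-f) := by rw [MulMemClass.coe_mul, mul_assoc]
          _ = Bmat n (-f) := by rw [inv_mul_cancel, OneMemClass.coe_one, one_mul]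
  have key : ∀ x : Matrix.symplecticGroup (Fin n) ℤ, x ∈ T → x ≠ 1 →
      sympMap (Int.castRingHom (ZMod (p ^ e))) x ∉
        Subgroup.center (Matrix.symplecticGroup (Fin n) (ZMod (p ^ e))) := by
    intro x hxT hx1 hcen
    obtain ⟨f, hf⟩ := hrep x hxT
    have hfne : ∃ i, f i ≠ 0 := by
      by_contra hc
      push_neg at hc
      apply hx1
      apply Subtype.ext
      have hf0 : f = 0 := funext hc
      rw [hf, hf0, Bmat_zero]; rfl
    obtain ⟨i, hfi⟩ := hfne
    have hcomm := (Subgroup.mem_center_iff.mp hcen)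
      ⟨Matrix.J (Fin n) (ZMod (p ^ e)), SymplecticGroup.J_mem _ _⟩
    have hmat : Matrix.J (Fin n) (ZMod (p ^ e)) *
          ((x : Matrix (Fin n ⊕ Fin n) (Fin n ⊕ Fin n) ℤ).map (Int.castRingHom (ZMod (p ^ e))))
        = ((x : Matrix (Fin n ⊕ Fin n) (Fin n ⊕ Fin n) ℤ).map (Int.castRingHom (ZMod (p ^ e)))) *
          Matrix.J (Fin n) (ZMod (p ^ e)) := congrArg Subtype.val hcomm
    have hentry := congrFun (congrFun hmat (Sum.inl i)) (Sum.inr i)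
    rw [J_mul_apply, mul_J_apply] at hentry
    have h00 : ((x : Matrix (Fin n ⊕ Fin n) (Fin n ⊕ Fin n) ℤ).map
          (Int.castRingHom (ZMod (p ^ e)))) (Sum.inl i) (Sum.inl i)
        = ((wEnt (f i) 0 0 : ℤ) : ZMod (p ^ e)) := by
      rw [hf]; simp [Bmat, Matrix.map_apply]
    have h11 : ((x : Matrix (Fin n ⊕ Fin n) (Fin n ⊕ Fin n) ℤ).map
          (Int.castRingHom (ZMod (p ^ e)))) (Sum.inr i) (Sum.inr i)
        = ((wEnt (f i) 1 1 : ℤ) : ZMod (p ^ e)) := by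
      rw [hf]; simp [Bmat, Matrix.map_apply]
    rw [h00, h11] at hentry
    have hd : wEnt (f i) 0 0 - wEnt (f i) 1 1 = 1 ∨ wEnt (f i) 0 0 - wEnt (f i) 1 1 = -1 := by
      have hall : ∀ c : ZMod 3, c ≠ 0 →
          wEnt c 0 0 - wEnt c 1 1 = 1 ∨ wEnt c 0 0 - wEnt c 1 1 = -1 := by decide
      exact hall _ hfi
    have hzero : ((wEnt (f i) 0 0 - wEnt (f i) 1 1 : ℤ) : ZMod (p ^ e)) = 0 := by
      push_cast
      linear_combination hentry
    rcases hd with hd | hd <;> rw [hd] at hzero <;> simp at hzero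
  refine ⟨?_, key⟩
  intro x hx y hy hxy
  by_contra hne
  have hmem : x * y⁻¹ ∈ T := mul_mem hx (inv_mem hy)
  have hne1 : x * y⁻¹ ≠ 1 := fun hcon => hne (mul_inv_eq_one.mp hcon)
  apply key _ hmem hne1
  rw [map_mul, map_inv, hxy, mul_inv_cancel]
  exact Subgroup.one_mem _
end

section
/- For every n ≥ 1 and every integer m ≥ 1, the reduction homomorphism Sp(2n,ℤ) → Sp(2n, ℤ/mℤ) induced by entrywise reduction modulo m is surjective. -/
/-!
The target is generated by the symplectic transvections `x ↦ x + c ω(x, v) v`, and each of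
them lifts to a transvection over `ℤ`.

Over a local ring `R` the transvections generate `Sp(2n, R)`: a symplectic `M` is brought to the
identity one hyperbolic pair `(eᵢ, fᵢ)` at a time. Two transvections move `M eᵢ` back to `eᵢ`
through an intermediate vector `z` with `ω(M eᵢ, z)` and `ω(z, eᵢ)` units, which exists because
the nonunits of a local ring are closed under addition; two more, whose vectors are
`ω`-orthogonal to `eᵢ`, then move the image of `fᵢ` back to `fᵢ`. All these vectors are
orthogonal to the pairs already fixed, so those stay fixed. By the Chinese remainder theorem
`ℤ/mℤ` is a finite product of the local rings `ℤ/pᵏℤ`, and generation by transvections passes to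
products and along ring isomorphisms.
-/

open Matrix Subgroup

theorem IsLocalRing.isUnit_add_of_isUnit_of_not_isUnit {R : Type*} [CommRing R] [IsLocalRing R]
    {x y : R} (hx : IsUnit x) (hy : ¬IsUnit y) : IsUnit (x + y) := by
  by_contra h
  have hy' : -y ∈ nonunits R := fun h' => hy ((IsUnit.neg_iff y).1 h')
  exact IsLocalRing.nonunits_add h hy' (by simpa using hx)

theorem LinearMap.BilinForm.exists_mem_isUnit_and_isUnit {R V : Type*} [CommRing R]
    [IsLocalRing R] [AddCommGroup V] [Module R V] (B : LinearMap.BilinForm R V)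
    {N : Submodule R V} {u t a b : V} (ha : a ∈ N) (hb : b ∈ N) (hua : IsUnit (B u a))
    (hbt : IsUnit (B b t)) : ∃ z ∈ N, IsUnit (B u z) ∧ IsUnit (B z t) := by
  by_cases hat : IsUnit (B a t)
  · exact ⟨a, ha, hua, hat⟩
  by_cases hub : IsUnit (B u b)
  · exact ⟨b, hb, hub, hbt⟩
  refine ⟨a + b, add_mem ha hb, ?_, ?_⟩
  · rw [map_add]
    exact IsLocalRing.isUnit_add_of_isUnit_of_not_isUnit hua hub
  · rw [LinearMap.map_add₂, add_comm]
    exact IsLocalRing.isUnit_add_of_isUnit_of_not_isUnit hbt hat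

theorem mem_fixingSubgroup_insert_iff {G α : Type*} [Group G] [MulAction G α] {g : G} {x : α}
    {s : Set α} : g ∈ fixingSubgroup G (insert x s) ↔ g • x = x ∧ g ∈ fixingSubgroup G s := by
  simp [mem_fixingSubgroup_iff]

theorem isLocalRing_zmod_prime_pow {p k : ℕ} (hp : p.Prime) (hk : 0 < k) :
    IsLocalRing (ZMod (p ^ k)) :=
  have : Fact p.Prime := ⟨hp⟩
  have : Fact (1 < p ^ k) := ⟨Nat.one_lt_pow hk.ne' hp.one_lt⟩
  IsLocalRing.of_surjective' (PadicInt.toZModPow k) (ZMod.ringHom_surjective _)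

namespace SymplecticGroup

variable {l : Type*} [DecidableEq l] [Fintype l] {R : Type*} [CommRing R]

variable (l R) in
def symplecticForm : LinearMap.BilinForm R (l ⊕ l → R) := toBilin' (J l R)

local notation "ω" => symplecticForm _ _

theorem symplecticForm_apply (u v : l ⊕ l → R) : ω u v = u ⬝ᵥ J l R *ᵥ v :=
  toBilin'_apply' _ _ _

theorem symplecticForm_single_single (a b : l ⊕ l) :
    ω (Pi.single a 1) (Pi.single b 1) = J l R a b :=
  toBilin'_single _ _ _

theorem symplecticForm_isAlt : (symplecticForm l R).IsAlt := fun v => by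
  simp [symplecticForm_apply, J, fromBlocks_mulVec, dotProduct, Fintype.sum_sum_type, mul_comm,
    neg_mulVec]

theorem mem_iff_symplecticForm {A : Matrix (l ⊕ l) (l ⊕ l) R} :
    A ∈ symplecticGroup l R ↔ ∀ u v, ω (A *ᵥ u) (A *ᵥ v) = ω u v := by
  have h : ∀ u v, ω (A *ᵥ u) (A *ᵥ v) = toBilin' (Aᵀ * J l R * A) u v := fun u v => by
    rw [symplecticForm_apply, toBilin'_apply', ← mulVec_mulVec, ← mulVec_mulVec,
      dotProduct_mulVec u, vecMul_transpose]
  simp_rw [SymplecticGroup.mem_iff', h, symplecticForm, ← LinearMap.ext_iff₂,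
    EmbeddingLike.apply_eq_iff_eq]

theorem symplecticForm_smul_smul (M : symplecticGroup l R) (u v : l ⊕ l → R) :
    ω (M • u) (M • v) = ω u v :=
  mem_iff_symplecticForm.1 M.2 u v

theorem one_add_smul_vecMulVec_mulVec (v : l ⊕ l → R) (c : R) (x : l ⊕ l → R) :
    (1 + c • vecMulVec v (J l R *ᵥ v)) *ᵥ x = x + (c * ω x v) • v := by
  rw [add_mulVec, one_mulVec, smul_mulVec, vecMulVec_mulVec, symplecticForm_apply,
    dotProduct_comm, op_smul_eq_smul, smul_smul]

def symplecticTransvection (v : l ⊕ l → R) (c : R) : symplecticGroup l R :=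
  ⟨1 + c • vecMulVec v (J l R *ᵥ v), mem_iff_symplecticForm.2 fun x y => by
    have h := symplecticForm_isAlt (l := l) (R := R)
    simp only [one_add_smul_vecMulVec_mulVec, map_add, map_smul, LinearMap.add_apply,
      LinearMap.smul_apply, smul_eq_mul, h.self_eq_zero, ← h.neg_eq v]
    ring⟩

theorem symplecticTransvection_smul (v : l ⊕ l → R) (c : R) (x : l ⊕ l → R) :
    symplecticTransvection v c • x = x + (c * ω x v) • v :=
  one_add_smul_vecMulVec_mulVec v c x

theorem symplecticTransvection_zero_right (v : l ⊕ l → R) :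
    symplecticTransvection v 0 = 1 :=
  Subtype.ext (by simp [symplecticTransvection])

theorem sympMap_symplecticTransvection {S : Type*} [CommRing S] (f : R →+* S)
    (v : l ⊕ l → R) (c : R) :
    sympMap f (symplecticTransvection v c) = symplecticTransvection (f ∘ v) (f c) := by
  refine Subtype.ext ?_
  ext a b
  simp [sympMap, symplecticTransvection, vecMulVec_apply, RingHom.map_mulVec, map_J, one_apply,
    apply_ite f]

def transvections (N : Set (l ⊕ l → R)) : Set (symplecticGroup l R) :=
  {g | ∃ v ∈ N, ∃ c, symplecticTransvection v c = g}

variable (l R) in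
abbrev transvectionSubgroup : Subgroup (symplecticGroup l R) :=
  closure (transvections (Set.univ : Set (l ⊕ l → R)))

theorem transvections_mono {N N' : Set (l ⊕ l → R)} (h : N ⊆ N') :
    transvections N ⊆ transvections N' := by
  rintro _ ⟨v, hv, c, rfl⟩
  exact ⟨v, h hv, c, rfl⟩

theorem exists_mem_closure_transvections_smul_eq {N : Set (l ⊕ l → R)} {u t : l ⊕ l → R}
    (hut : t - u ∈ N) (h : IsUnit (ω u t)) :
    ∃ G ∈ closure (transvections N), G • u = t := by
  refine ⟨symplecticTransvection (t - u) ↑h.unit⁻¹, subset_closure ⟨_, hut, _, rfl⟩, ?_⟩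
  rw [symplecticTransvection_smul, map_sub, symplecticForm_isAlt.self_eq_zero, sub_zero,
    IsUnit.val_inv_mul, one_smul, add_sub_cancel]

def symplecticComplement (W : Set (l ⊕ l → R)) : Submodule R (l ⊕ l → R) :=
  ⨅ w ∈ W, LinearMap.ker (ω w)

theorem mem_symplecticComplement {W : Set (l ⊕ l → R)} {v : l ⊕ l → R} :
    v ∈ symplecticComplement W ↔ ∀ w ∈ W, ω w v = 0 := by
  simp [symplecticComplement]

theorem sub_smul_mem_symplecticComplement {W : Set (l ⊕ l → R)} {M : symplecticGroup l R}
    (hM : M ∈ fixingSubgroup (symplecticGroup l R) W) (x : l ⊕ l → R) :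
    x - M • x ∈ symplecticComplement W :=
  mem_symplecticComplement.2 fun w hw => by
    rw [map_sub, ← symplecticForm_smul_smul M w x, (mem_fixingSubgroup_iff _).1 hM w hw, sub_self]

theorem smul_mem_symplecticComplement {W : Set (l ⊕ l → R)} {M : symplecticGroup l R}
    (hM : M ∈ fixingSubgroup (symplecticGroup l R) W) {x : l ⊕ l → R}
    (hx : x ∈ symplecticComplement W) : M • x ∈ symplecticComplement W := by
  simpa using sub_mem hx (sub_smul_mem_symplecticComplement hM x)

theorem closure_transvections_le_fixingSubgroup (W : Set (l ⊕ l → R)) :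
    closure (transvections (symplecticComplement W : Set (l ⊕ l → R))) ≤
      fixingSubgroup (symplecticGroup l R) W := by
  refine closure_le _ |>.2 ?_
  rintro _ ⟨v, hv, c, rfl⟩
  exact (mem_fixingSubgroup_iff _).2 fun w hw => by
    rw [symplecticTransvection_smul, mem_symplecticComplement.1 hv w hw, mul_zero, zero_smul,
      add_zero]

variable (R) in
def hyperbolicPairs (t : Finset l) : Set (l ⊕ l → R) :=
  ⋃ i ∈ t, {Pi.single (Sum.inl i) 1, Pi.single (Sum.inr i) 1}

theorem single_mem_symplecticComplement_hyperbolicPairs {t : Finset l} {i : l} (hi : i ∉ t) :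
    Pi.single (Sum.inl i) 1 ∈ symplecticComplement (hyperbolicPairs R t) ∧
      Pi.single (Sum.inr i) 1 ∈ symplecticComplement (hyperbolicPairs R t) := by
  have hne : ∀ j ∈ t, j ≠ i := fun j hj h => hi (h ▸ hj)
  constructor <;> refine mem_symplecticComplement.2 fun w hw => ?_ <;>
    obtain ⟨j, hj, rfl | rfl⟩ : ∃ j ∈ t, w = Pi.single (Sum.inl j) 1 ∨
      w = Pi.single (Sum.inr j) 1 := (by simpa [hyperbolicPairs] using hw) <;>
    simp [symplecticForm_single_single, J, hne j hj]

theorem single_mem_or_mem_symplecticComplement_hyperbolicPairs (t : Finset l) (a : l ⊕ l) :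
    Pi.single a 1 ∈ hyperbolicPairs R t ∨
      Pi.single a 1 ∈ symplecticComplement (hyperbolicPairs R t) := by
  rcases a with i | i <;> by_cases hi : i ∈ t
  · exact .inl (Set.mem_iUnion₂.2 ⟨i, hi, by simp⟩)
  · exact .inr (single_mem_symplecticComplement_hyperbolicPairs hi).1
  · exact .inl (Set.mem_iUnion₂.2 ⟨i, hi, by simp⟩)
  · exact .inr (single_mem_symplecticComplement_hyperbolicPairs hi).2

theorem fixingSubgroup_hyperbolicPairs_univ :
    fixingSubgroup (symplecticGroup l R) (hyperbolicPairs R (Finset.univ : Finset l)) = ⊥ := by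
  refine eq_bot_iff.2 fun M hM => Subtype.ext <| ext_of_mulVec_single fun a => ?_
  rw [Submonoid.coe_one, one_mulVec]
  exact (mem_fixingSubgroup_iff _).1 hM _ <| by
    rcases a with i | i <;> exact Set.mem_iUnion₂.2 ⟨i, Finset.mem_univ i, by simp⟩

section IsLocalRing

variable [IsLocalRing R]

theorem exists_mem_symplecticComplement_isUnit {W : Set (l ⊕ l → R)}
    (hW : ∀ a, Pi.single a 1 ∈ W ∨ Pi.single a 1 ∈ symplecticComplement W)
    {u v : l ⊕ l → R} (hu : u ∈ symplecticComplement W) (huv : IsUnit (ω u v)) :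
    ∃ z ∈ symplecticComplement W, IsUnit (ω u z) := by
  rw [pi_eq_sum_univ' v, map_sum] at huv
  obtain ⟨a, -, ha⟩ := IsLocalRing.exists_of_isUnit_sum huv
  rw [map_smul, smul_eq_mul] at ha
  refine ⟨Pi.single a 1, (hW a).resolve_left fun haW => ?_, isUnit_of_mul_isUnit_right ha⟩
  have : ω u (Pi.single a 1) = 0 :=
    symplecticForm_isAlt.eq_iff.1 (mem_symplecticComplement.1 hu _ haW)
  simp [this] at ha

theorem exists_mem_closure_transvections_smul_eq_of_isUnit {N : Submodule R (l ⊕ l → R)}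
    {u t a b : l ⊕ l → R} (hu : u ∈ N) (ht : t ∈ N) (ha : a ∈ N) (hb : b ∈ N)
    (hua : IsUnit (ω u a)) (hbt : IsUnit (ω b t)) :
    ∃ G ∈ closure (transvections (N : Set (l ⊕ l → R))), G • u = t := by
  obtain ⟨z, hz, huz, hzt⟩ := (symplecticForm l R).exists_mem_isUnit_and_isUnit ha hb hua hbt
  obtain ⟨G₁, hG₁, h₁⟩ := exists_mem_closure_transvections_smul_eq (sub_mem hz hu) huz
  obtain ⟨G₂, hG₂, h₂⟩ := exists_mem_closure_transvections_smul_eq (sub_mem ht hz) hzt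
  exact ⟨G₂ * G₁, mul_mem hG₂ hG₁, by rw [mul_smul, h₁, h₂]⟩

theorem exists_mem_closure_transvections_smul_smul_eq {W : Set (l ⊕ l → R)}
    {M : symplecticGroup l R} (hM : M ∈ fixingSubgroup (symplecticGroup l R) W)
    {e x : l ⊕ l → R} (heW : e ∈ W) (he : e ∈ symplecticComplement W) (hex : IsUnit (ω e x)) :
    ∃ G ∈ closure (transvections (symplecticComplement W : Set (l ⊕ l → R))), G • M • x = x := by
  have hx := sub_smul_mem_symplecticComplement hM x
  by_cases hMx : IsUnit (ω (M • x) x)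
  · exact exists_mem_closure_transvections_smul_eq hx hMx
  have h₁ : IsUnit (ω (M • x) (M • x + e)) := by
    rw [map_add, symplecticForm_isAlt.self_eq_zero, zero_add,
      ← (mem_fixingSubgroup_iff _).1 hM e heW, symplecticForm_smul_smul,
      ← symplecticForm_isAlt.neg_eq]
    exact hex.neg
  have h₂ : IsUnit (ω (M • x + e) x) := by
    rw [LinearMap.map_add₂, add_comm]
    exact IsLocalRing.isUnit_add_of_isUnit_of_not_isUnit hex hMx
  obtain ⟨G₁, hG₁, hG₁x⟩ := exists_mem_closure_transvections_smul_eq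
    (N := symplecticComplement W) (by simpa using he) h₁
  obtain ⟨G₂, hG₂, hG₂x⟩ := exists_mem_closure_transvections_smul_eq
    (N := symplecticComplement W) (by simpa [sub_add_eq_sub_sub] using sub_mem hx he) h₂
  exact ⟨G₂ * G₁, mul_mem hG₂ hG₁, by rw [mul_smul, hG₁x, hG₂x]⟩

theorem exists_mem_transvectionSubgroup_mul_mem_fixingSubgroup_insert {t : Finset l} {i : l}
    (hi : i ∉ t) {M : symplecticGroup l R}
    (hM : M ∈ fixingSubgroup (symplecticGroup l R) (hyperbolicPairs R t)) :
    ∃ G ∈ transvectionSubgroup l R,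
      G * M ∈ fixingSubgroup (symplecticGroup l R) (hyperbolicPairs R (insert i t)) := by
  set W := hyperbolicPairs R t
  set e : l ⊕ l → R := Pi.single (Sum.inl i) 1
  set f : l ⊕ l → R := Pi.single (Sum.inr i) 1
  obtain ⟨he, hf⟩ := single_mem_symplecticComplement_hyperbolicPairs (R := R) hi
  have hef : IsUnit (ω e f) := by simp [e, f, symplecticForm_single_single, J]
  have hfe : IsUnit (ω f e) := by simp [e, f, symplecticForm_single_single, J]
  have hMe := smul_mem_symplecticComplement hM he
  obtain ⟨z, hz, hMez⟩ := exists_mem_symplecticComplement_isUnit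
    (single_mem_or_mem_symplecticComplement_hyperbolicPairs t) hMe
    (v := M • f) (by rwa [symplecticForm_smul_smul])
  obtain ⟨G₁, hG₁, hG₁e⟩ :=
    exists_mem_closure_transvections_smul_eq_of_isUnit hMe he hz hf hMez hfe
  have hG₁M : G₁ * M ∈ fixingSubgroup _ (insert e W) := mem_fixingSubgroup_insert_iff.2
    ⟨by rw [mul_smul, hG₁e], mul_mem (closure_transvections_le_fixingSubgroup W hG₁) hM⟩
  have he' : e ∈ symplecticComplement (insert e W) := mem_symplecticComplement.2 <|
    Set.forall_mem_insert.2 ⟨symplecticForm_isAlt.self_eq_zero e, mem_symplecticComplement.1 he⟩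
  obtain ⟨G₂, hG₂, hG₂f⟩ :=
    exists_mem_closure_transvections_smul_smul_eq hG₁M (Set.mem_insert e W) he' hef
  have hpairs : hyperbolicPairs R (insert i t) = insert f (insert e W) := by
    rw [hyperbolicPairs, Finset.set_biUnion_insert, Set.insert_union, Set.singleton_union,
      Set.insert_comm]
    rfl
  refine ⟨G₂ * G₁, mul_mem (closure_mono (transvections_mono (Set.subset_univ _)) hG₂)
    (closure_mono (transvections_mono (Set.subset_univ _)) hG₁), ?_⟩
  rw [hpairs, mul_assoc, mem_fixingSubgroup_insert_iff, mul_smul]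
  exact ⟨hG₂f, mul_mem (closure_transvections_le_fixingSubgroup _ hG₂) hG₁M⟩

theorem transvectionSubgroup_eq_top_of_isLocalRing : transvectionSubgroup l R = ⊤ := by
  have key : ∀ (t : Finset l) (M : symplecticGroup l R),
      ∃ G ∈ transvectionSubgroup l R,
        G * M ∈ fixingSubgroup (symplecticGroup l R) (hyperbolicPairs R t) := by
    intro t M
    induction t using Finset.induction_on with
    | empty => exact ⟨1, one_mem _, by simp [hyperbolicPairs]⟩
    | insert i t hi ih =>
      obtain ⟨G, hG, hGM⟩ := ih
      obtain ⟨G', hG', hG'GM⟩ :=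
        exists_mem_transvectionSubgroup_mul_mem_fixingSubgroup_insert hi hGM
      exact ⟨G' * G, mul_mem hG' hG, by rwa [mul_assoc]⟩
  refine eq_top_iff.2 fun M _ => ?_
  obtain ⟨G, hG, hGM⟩ := key Finset.univ M
  rw [fixingSubgroup_hyperbolicPairs_univ, mem_bot] at hGM
  rw [eq_inv_of_mul_eq_one_right hGM]
  exact inv_mem hG

end IsLocalRing

section Reduction

variable {S : Type*} [CommRing S]

theorem map_transvectionSubgroup_le (f : R →+* S) :
    (transvectionSubgroup l R).map (sympMap f) ≤ transvectionSubgroup l S := by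
  rw [MonoidHom.map_closure]
  refine closure_mono ?_
  rintro _ ⟨_, ⟨v, -, c, rfl⟩, rfl⟩
  exact ⟨f ∘ v, trivial, f c, (sympMap_symplecticTransvection f v c).symm⟩

theorem transvectionSubgroup_le_range_sympMap {f : R →+* S} (hf : Function.Surjective f) :
    transvectionSubgroup l S ≤ (sympMap f).range := by
  refine closure_le _ |>.2 ?_
  rintro _ ⟨v, -, c, rfl⟩
  refine ⟨symplecticTransvection (Function.surjInv hf ∘ v) (Function.surjInv hf c), ?_⟩
  rw [sympMap_symplecticTransvection, ← Function.comp_assoc, Function.surjInv_eq hf,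
    Function.comp_surjInv hf, Function.id_comp]

theorem transvectionSubgroup_eq_top_of_ringEquiv (e : R ≃+* S)
    (h : transvectionSubgroup l R = ⊤) : transvectionSubgroup l S = ⊤ := by
  refine eq_top_iff.2 fun M _ => map_transvectionSubgroup_le e.toRingHom ?_
  rw [h]
  refine ⟨sympMap e.symm.toRingHom M, mem_top _, Subtype.ext ?_⟩
  ext a b
  simp [sympMap]

theorem transvectionSubgroup_prod_eq_top (hR : transvectionSubgroup l R = ⊤)
    (hS : transvectionSubgroup l S = ⊤) : transvectionSubgroup l (R × S) = ⊤ := by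
  set φ := (sympMap (l := l) (RingHom.fst R S)).prod (sympMap (RingHom.snd R S))
  have hφ : Function.Injective φ := fun M N h => Subtype.ext <| by
    ext a b
    exacts [congrFun₂ (congrArg Subtype.val (congrArg Prod.fst h)) a b,
      congrFun₂ (congrArg Subtype.val (congrArg Prod.snd h)) a b]
  have hle : (⊤ : Subgroup (symplecticGroup l R)).prod ⊤ ≤
      (transvectionSubgroup l (R × S)).map φ := by
    rw [← hR, ← hS, prod_le_iff, MonoidHom.map_closure, MonoidHom.map_closure,
      MonoidHom.map_closure]
    refine ⟨closure_mono ?_, closure_mono ?_⟩ <;> rintro _ ⟨_, ⟨v, -, c, rfl⟩, rfl⟩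
    · refine ⟨_, ⟨fun a => (v a, 0), trivial, (c, 0), rfl⟩, ?_⟩
      simp [φ, sympMap_symplecticTransvection, Function.comp_def, symplecticTransvection_zero_right]
    · refine ⟨_, ⟨fun a => (0, v a), trivial, (0, c), rfl⟩, ?_⟩
      simp [φ, sympMap_symplecticTransvection, Function.comp_def, symplecticTransvection_zero_right]
  refine eq_top_iff.2 fun M _ => ?_
  obtain ⟨P, hP, hPM⟩ := hle (mem_prod.2 ⟨mem_top _, mem_top _⟩ : φ M ∈ _)
  rwa [← hφ hPM]

end Reduction

theorem transvectionSubgroup_zmod_eq_top {m : ℕ} (hm : m ≠ 0) :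
    transvectionSubgroup l (ZMod m) = ⊤ := by
  induction m using Nat.recOnPosPrimePosCoprime with
  | prime_pow p k hp hk =>
    have := isLocalRing_zmod_prime_pow hp hk
    exact transvectionSubgroup_eq_top_of_isLocalRing
  | zero => exact absurd rfl hm
  | one =>
    refine eq_top_iff.2 fun M _ => ?_
    rw [Subsingleton.elim M 1]
    exact one_mem _
  | coprime a b ha hb hab iha ihb =>
    exact transvectionSubgroup_eq_top_of_ringEquiv (ZMod.chineseRemainder hab).symm
      (transvectionSubgroup_prod_eq_top (iha (by omega)) (ihb (by omega)))

end SymplecticGroup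

theorem symplecticGroup_reduction_surjective_general (n m : ℕ) (hm : 1 ≤ m) :
    Function.Surjective
      (sympMap (Int.castRingHom (ZMod m)) :
        Matrix.symplecticGroup (Fin n) ℤ →* Matrix.symplecticGroup (Fin n) (ZMod m)) := by
  rw [← MonoidHom.range_eq_top, eq_top_iff,
    ← SymplecticGroup.transvectionSubgroup_zmod_eq_top (by omega : m ≠ 0)]
  exact SymplecticGroup.transvectionSubgroup_le_range_sympMap (ZMod.ringHom_surjective _)

/-- For every `n ≥ 1` and `m ≥ 1`, the entrywise reduction homomorphism
`Sp(2n,ℤ) → Sp(2n, ℤ/mℤ)` is surjective. -/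
theorem symplecticGroup_reduction_surjective (n m : ℕ) (hn : 1 ≤ n) (hm : 1 ≤ m) :
    Function.Surjective
      (sympMap (Int.castRingHom (ZMod m)) :
        Matrix.symplecticGroup (Fin n) ℤ →* Matrix.symplecticGroup (Fin n) (ZMod m)) :=
  symplecticGroup_reduction_surjective_general n m hm
end

section
/- The group Sp(4, ℤ/2ℤ) is isomorphic to the symmetric group on 6 letters. -/
/-!
Let `E ⊂ 𝔽₂⁶` be the even-weight vectors and `𝟙 = (1, …, 1) ∈ E`. The dot product is alternating
on `E` with radical `⟨𝟙⟩`, so `E / ⟨𝟙⟩` is a 4-dimensional symplectic space on which `S₆` acts by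
permuting coordinates. In a symplectic basis this gives a homomorphism `S₆ → Sp(4, 𝔽₂)`. Its
kernel is a normal subgroup of `S₆` not containing the 3-cycle `(0 1 2)`, hence trivial. Finally
`|Sp(4, 𝔽₂)| ≤ 720 = |S₆|`, because the rows of a symplectic matrix form a symplectic basis and
there are `15 · 8 · 3 · 2 = 720` of those.
-/

open Matrix Equiv

namespace Matrix

section Compress

variable {R m n : Type*} [CommSemiring R] [Fintype n]

/-- When the columns of `Q` lift a basis of `u^⊥ / ⟨u⟩` and `P` takes coordinates in it,
`compress P Q M` is the matrix of the map induced by `M` on that quotient. -/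
def compress (P : Matrix m n R) (Q : Matrix n m R) (M : Matrix n n R) : Matrix m m R :=
  P * M * Q

variable [Fintype m] [DecidableEq n]
  {P : Matrix m n R} {Q : Matrix n m R} {u a b : n → R} {M N : Matrix n n R}

lemma compress_mul (hPu : P *ᵥ u = 0) (huQ : u ᵥ* Q = 0)
    (hQP : Q * P = 1 + vecMulVec u a + vecMulVec b u) (hM : M *ᵥ u = u) (hN : u ᵥ* N = u) :
    compress P Q (M * N) = compress P Q M * compress P Q N := by
  calc P * (M * N) * Q
      = P * M * (1 + vecMulVec u a + vecMulVec b u) * N * Q := by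
        simp only [Matrix.mul_add, Matrix.add_mul, Matrix.mul_one, mul_vecMulVec, vecMulVec_mul,
          ← mulVec_mulVec, hM, hPu, hN, huQ, zero_vecMulVec, vecMulVec_zero, add_zero,
          Matrix.mul_assoc]
    _ = P * M * Q * (P * N * Q) := by simp only [← hQP, Matrix.mul_assoc]

lemma transpose_compress_mul_mul_compress {K : Matrix m m R}
    (huQ : u ᵥ* Q = 0) (hPKP : Pᵀ * K * P = 1 + vecMulVec u a + vecMulVec b u)
    (huM : u ᵥ* M = u) (hMM : Mᵀ * M = 1) :
    (compress P Q M)ᵀ * K * compress P Q M = Qᵀ * Q := by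
  have hMtu : Mᵀ *ᵥ u = u := by rw [mulVec_transpose, huM]
  have hQtu : Qᵀ *ᵥ u = 0 := by rw [mulVec_transpose, huQ]
  calc (P * M * Q)ᵀ * K * (P * M * Q) = Qᵀ * Mᵀ * (Pᵀ * K * P) * M * Q := by
        simp only [transpose_mul, Matrix.mul_assoc]
    _ = Qᵀ * (Mᵀ * M) * Q := by
      simp only [hPKP, Matrix.mul_add, Matrix.add_mul, Matrix.mul_one, mul_vecMulVec,
        vecMulVec_mul, ← mulVec_mulVec, hMtu, hQtu, huM, huQ, zero_vecMulVec, vecMulVec_zero,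
        add_zero, Matrix.mul_assoc]
    _ = Qᵀ * Q := by rw [hMM, Matrix.mul_one]

end Compress

section PermMatrix

variable {R n : Type*} [CommRing R] [Fintype n] [DecidableEq n] (σ : Perm n)

lemma permMatrix_mulVec_one : σ.permMatrix R *ᵥ 1 = 1 := by
  rw [permMatrix_mulVec]; rfl

lemma one_vecMul_permMatrix : 1 ᵥ* σ.permMatrix R = 1 := by
  rw [vecMul_permMatrix]; rfl

lemma transpose_permMatrix_mul_self : (σ.permMatrix R)ᵀ * σ.permMatrix R = 1 := by
  rw [transpose_permMatrix, ← permMatrix_mul, mul_inv_cancel, permMatrix_one]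

end PermMatrix

lemma mem_symplecticGroup_iff_rows {l R : Type*} [Fintype l] [DecidableEq l] [CommRing R]
    {A : Matrix (l ⊕ l) (l ⊕ l) R} :
    A ∈ symplecticGroup l R ↔ ∀ i k, A i ⬝ᵥ J l R *ᵥ A k = J l R i k := by
  rw [SymplecticGroup.mem_iff, ← Matrix.ext_iff]
  simp only [mul_mul_apply, transpose_transpose]

end Matrix

namespace Sp4ZModTwo

local notation "V" => Fin 2 ⊕ Fin 2 → ZMod 2

def ω (x y : V) : ZMod 2 := x ⬝ᵥ J (Fin 2) (ZMod 2) *ᵥ y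

abbrev SymplecticBasis : Type :=
  {t : V × V × V × V // ω t.1 t.2.1 = 1 ∧ (ω t.1 t.2.2.1 = 0 ∧ ω t.2.1 t.2.2.1 = 0) ∧
    ω t.1 t.2.2.2 = 0 ∧ ω t.2.1 t.2.2.2 = 0 ∧ ω t.2.2.1 t.2.2.2 = 1}

/-- The conditions are ordered so that, once the sum is split along the conjunctions, each one
prunes the remaining search. -/
lemma card_symplecticBasis : Nat.card SymplecticBasis = 720 := by
  rw [SymplecticBasis, Nat.card_eq_fintype_card, Fintype.card_subtype, Finset.card_filter]
  simp only [Fintype.sum_prod_type, ite_and, Finset.sum_ite_irrel, Finset.sum_const_zero]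
  decide +kernel

lemma card_symplecticGroup_le : Nat.card (symplecticGroup (Fin 2) (ZMod 2)) ≤ 720 := by
  rw [← card_symplecticBasis]
  refine Nat.card_le_card_of_injective
    (fun A => ⟨(A.1 (.inl 0), A.1 (.inr 0), A.1 (.inl 1), A.1 (.inr 1)), ?_⟩) ?_
  · have h := mem_symplecticGroup_iff_rows.mp A.2
    exact ⟨(h _ _).trans (by decide), ⟨(h _ _).trans (by decide), (h _ _).trans (by decide)⟩,
      (h _ _).trans (by decide), (h _ _).trans (by decide), (h _ _).trans (by decide)⟩
  · intro A B hAB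
    simp only [Subtype.mk.injEq, Prod.mk.injEq] at hAB
    obtain ⟨h₁, h₂, h₃, h₄⟩ := hAB
    refine Subtype.ext (funext fun i => ?_)
    rcases i with i | i <;> fin_cases i
    exacts [h₁, h₃, h₂, h₄]

/-- The columns of `Q` are `110000, 000110, 011000, 000011`, whose classes form a symplectic basis
of `E / ⟨𝟙⟩`; `P = J Qᵀ` takes coordinates in that basis. -/
def Q : Matrix (Fin 6) (Fin 2 ⊕ Fin 2) (ZMod 2) :=
  (of (Sum.elim ![![1, 1, 0, 0, 0, 0], ![0, 0, 0, 1, 1, 0]]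
    ![![0, 1, 1, 0, 0, 0], ![0, 0, 0, 0, 1, 1]]))ᵀ

def P : Matrix (Fin 2 ⊕ Fin 2) (Fin 6) (ZMod 2) := J (Fin 2) (ZMod 2) * Qᵀ

lemma P_mulVec_one : P *ᵥ 1 = 0 := by decide +kernel

lemma one_vecMul_Q : 1 ᵥ* Q = 0 := by decide +kernel

lemma Q_mul_P :
    Q * P = 1 + vecMulVec 1 ![1, 1, 1, 0, 0, 0] + vecMulVec ![0, 0, 0, 1, 1, 1] 1 := by
  decide +kernel

lemma transpose_P_mul_J_mul_P : Pᵀ * J (Fin 2) (ZMod 2) * P =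
    1 + vecMulVec 1 ![1, 1, 1, 0, 0, 0] + vecMulVec ![0, 0, 0, 1, 1, 1] 1 := by
  decide +kernel

lemma transpose_Q_mul_Q : Qᵀ * Q = J (Fin 2) (ZMod 2) := by decide +kernel

lemma compress_permMatrix_mem (σ : Perm (Fin 6)) :
    compress P Q (σ.permMatrix (ZMod 2)) ∈ symplecticGroup (Fin 2) (ZMod 2) := by
  rw [SymplecticGroup.mem_iff', transpose_compress_mul_mul_compress one_vecMul_Q
    transpose_P_mul_J_mul_P (one_vecMul_permMatrix σ) (transpose_permMatrix_mul_self σ),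
    transpose_Q_mul_Q]

def permRep : Perm (Fin 6) →* symplecticGroup (Fin 2) (ZMod 2) :=
  MonoidHom.mk'
    (fun σ => ⟨compress P Q (permMatrixHom (R := ZMod 2) σ), compress_permMatrix_mem _⟩)
    fun σ τ => Subtype.ext <| by
      simp only [map_mul, permMatrixHom_apply]
      exact compress_mul P_mulVec_one one_vecMul_Q Q_mul_P (permMatrix_mulVec_one _)
        (one_vecMul_permMatrix _)

lemma threeCycle_mem_alternatingGroup :
    swap (0 : Fin 6) 1 * swap 1 2 ∈ alternatingGroup (Fin 6) := by
  simp [Perm.mem_alternatingGroup]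

lemma permRep_threeCycle_ne_one : permRep (swap 0 1 * swap 1 2) ≠ 1 := by
  rw [Ne, Subtype.ext_iff]
  decide +kernel

lemma permRep_injective : Function.Injective permRep := by
  rw [← MonoidHom.ker_eq_bot_iff]
  by_contra hker
  have hnontrivial := (Subgroup.nontrivial_iff_ne_bot _).mpr hker
  exact permRep_threeCycle_ne_one <| permRep.mem_ker.mp <|
    Perm.alternatingGroup_le_of_normal (by simp) hnontrivial threeCycle_mem_alternatingGroup

end Sp4ZModTwo

/-- The group `Sp(4, ℤ/2ℤ)` is isomorphic to the symmetric group on 6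
letters. -/
theorem sp4_mod_two_iso_perm_six :
    Nonempty (Matrix.symplecticGroup (Fin 2) (ZMod 2) ≃* Equiv.Perm (Fin 6)) := by
  have hcard : Nat.card (Matrix.symplecticGroup (Fin 2) (ZMod 2)) ≤ Nat.card (Perm (Fin 6)) :=
    Sp4ZModTwo.card_symplecticGroup_le.trans_eq (by rw [Nat.card_perm, Nat.card_fin]; rfl)
  exact ⟨(MulEquiv.ofBijective Sp4ZModTwo.permRep
    (Sp4ZModTwo.permRep_injective.bijective_of_nat_card_le hcard)).symm⟩
end

section
/- Let Q be a finite group whose order is a power of 2. Then every group homomorphism φ : Sp(4,ℤ) → Q has image of cardinality at most 2. In particular, the only nontrivial finite 2-group onto which Sp(4,ℤ) surjects is ℤ/2ℤ. -/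
/-!
`Sp(4,ℤ)` is generated by the symplectic transvections `x ↦ x + c ω(v, x) v` along unimodular
vectors `v`: a Euclidean algorithm, run with such transvections, moves the columns of any
symplectic matrix onto the standard basis one at a time. Since `Sp(4,ℤ)` acts transitively on
unimodular vectors, each of these transvections is conjugate to a power of the transvection `t`
along `e₁`, so every abelian quotient of `Sp(4,ℤ)` is cyclic, generated by the image of `t`. A
relation `(t₁t₂t₃t₄t₅)⁶ = 1` among five conjugates of `t` makes that image have order dividing 30.

A finite `p`-group whose abelianization has order at most `p` has order at most `p`: the quotient
by the (nontrivial) centre inherits the hypothesis, so by induction it is cyclic, and then the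
group is abelian.
-/

open Matrix Sum Relation

def symplecticForm {l R : Type*} [DecidableEq l] [Fintype l] [CommRing R]
    (x y : l ⊕ l → R) : R :=
  (J l R *ᵥ x) ⬝ᵥ y

local notation "ω" => symplecticForm

section SymplecticForm

variable {l R : Type*} [DecidableEq l] [Fintype l] [CommRing R]

@[simp] lemma J_mulVec_inl (x : l ⊕ l → R) (i : l) : (J l R *ᵥ x) (inl i) = -x (inr i) := by
  simp [J, fromBlocks_mulVec, neg_mulVec]

@[simp] lemma J_mulVec_inr (x : l ⊕ l → R) (i : l) : (J l R *ᵥ x) (inr i) = x (inl i) := by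
  simp [J, fromBlocks_mulVec]

lemma symplecticForm_self (x : l ⊕ l → R) : ω x x = 0 := by
  simp [symplecticForm, dotProduct, Fintype.sum_sum_type, mul_comm]

lemma symplecticForm_comm (x y : l ⊕ l → R) : ω x y = -ω y x := by
  simp [symplecticForm, dotProduct, Fintype.sum_sum_type, mul_comm]

@[simp] lemma symplecticForm_add_smul_left (x v y : l ⊕ l → R) (a : R) :
    ω (x + a • v) y = ω x y + a * ω v y := by
  simp [symplecticForm, mulVec_add, mulVec_smul, add_dotProduct]

@[simp] lemma symplecticForm_add_smul_right (x y v : l ⊕ l → R) (a : R) :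
    ω x (y + a • v) = ω x y + a * ω x v := by
  simp [symplecticForm, dotProduct_add]

lemma symplecticForm_mulVec_mulVec (A : Matrix (l ⊕ l) (l ⊕ l) R) (x y : l ⊕ l → R) :
    ω (A *ᵥ x) (A *ᵥ y) = ((Aᵀ * J l R * A) *ᵥ x) ⬝ᵥ y := by
  rw [symplecticForm, dotProduct_mulVec, ← mulVec_transpose, mulVec_mulVec, mulVec_mulVec]

theorem mem_symplecticGroup_iff_symplecticForm {A : Matrix (l ⊕ l) (l ⊕ l) R} :
    A ∈ symplecticGroup l R ↔ ∀ x y, ω (A *ᵥ x) (A *ᵥ y) = ω x y := by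
  simp only [SymplecticGroup.mem_iff', symplecticForm_mulVec_mulVec]
  unfold symplecticForm
  refine ⟨fun h x y => by rw [h], fun h => ext_iff_mulVec.mpr fun x => funext fun i => ?_⟩
  simpa using h x (Pi.single i 1)

lemma symplecticForm_mulVec {P : Matrix (l ⊕ l) (l ⊕ l) R} (hP : P ∈ symplecticGroup l R)
    (x y : l ⊕ l → R) : ω (P *ᵥ x) (P *ᵥ y) = ω x y :=
  mem_symplecticGroup_iff_symplecticForm.mp hP x y

lemma one_add_smul_vecMulVec_mulVec (v : l ⊕ l → R) (c : R) (x : l ⊕ l → R) :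
    (1 + c • vecMulVec v (J l R *ᵥ v)) *ᵥ x = x + (c * ω v x) • v := by
  simp [add_mulVec, smul_mulVec, vecMulVec_mulVec, symplecticForm, smul_smul]

lemma one_add_smul_vecMulVec_mem (v : l ⊕ l → R) (c : R) :
    1 + c • vecMulVec v (J l R *ᵥ v) ∈ symplecticGroup l R := by
  refine mem_symplecticGroup_iff_symplecticForm.mpr fun x y => ?_
  simp only [one_add_smul_vecMulVec_mulVec, symplecticForm_add_smul_left,
    symplecticForm_add_smul_right, symplecticForm_self, symplecticForm_comm x v]
  ring

def symplecticTransvection (v : l ⊕ l → R) (c : R) : symplecticGroup l R :=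
  ⟨1 + c • vecMulVec v (J l R *ᵥ v), one_add_smul_vecMulVec_mem v c⟩

lemma symplecticTransvection_mulVec (v : l ⊕ l → R) (c : R) (x : l ⊕ l → R) :
    (symplecticTransvection v c : Matrix (l ⊕ l) (l ⊕ l) R) *ᵥ x = x + (c * ω v x) • v :=
  one_add_smul_vecMulVec_mulVec v c x

lemma symplecticGroup_ext_mulVec {g h : symplecticGroup l R}
    (hgh : ∀ x, (g : Matrix (l ⊕ l) (l ⊕ l) R) *ᵥ x = (h : Matrix (l ⊕ l) (l ⊕ l) R) *ᵥ x) :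
    g = h :=
  Subtype.ext (ext_iff_mulVec.mpr hgh)

lemma symplecticTransvection_add (v : l ⊕ l → R) (c d : R) :
    symplecticTransvection v (c + d) =
      symplecticTransvection v c * symplecticTransvection v d := by
  refine symplecticGroup_ext_mulVec fun x => ?_
  simp only [Submonoid.coe_mul, ← mulVec_mulVec, symplecticTransvection_mulVec,
    symplecticForm_add_smul_right, symplecticForm_self]
  module

lemma symplecticTransvection_zero (v : l ⊕ l → R) : symplecticTransvection v 0 = 1 :=
  symplecticGroup_ext_mulVec fun x => by simp [symplecticTransvection_mulVec]

lemma symplecticTransvection_intCast (v : l ⊕ l → R) (n : ℤ) :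
    symplecticTransvection v (n : R) = symplecticTransvection v 1 ^ n := by
  induction n using Int.induction_on with
  | zero => simpa using symplecticTransvection_zero v
  | succ n ih => rw [_root_.zpow_add_one, ← ih, ← symplecticTransvection_add]; push_cast; rfl
  | pred n ih =>
    rw [_root_.zpow_sub_one, ← ih, eq_mul_inv_iff_mul_eq, ← symplecticTransvection_add]
    push_cast; ring_nf

lemma symplecticTransvection_conj (P : symplecticGroup l R) (v : l ⊕ l → R) (c : R) :
    P * symplecticTransvection v c * P⁻¹ =
      symplecticTransvection ((P : Matrix (l ⊕ l) (l ⊕ l) R) *ᵥ v) c := by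
  rw [mul_inv_eq_iff_eq_mul]
  refine symplecticGroup_ext_mulVec fun x => ?_
  simp only [Submonoid.coe_mul, ← mulVec_mulVec, symplecticTransvection_mulVec, mulVec_add,
    mulVec_smul, symplecticForm_mulVec P.2]

def IsUnimodular (v : l ⊕ l → R) : Prop := ∃ u, ω v u = 1

lemma isUnimodular_of_apply_inl_eq_one {v : l ⊕ l → R} {i : l} (h : v (inl i) = 1) :
    IsUnimodular v :=
  ⟨Pi.single (inr i) 1, by simp [symplecticForm, h]⟩

lemma isUnimodular_of_apply_inr_eq_one {v : l ⊕ l → R} {i : l} (h : v (inr i) = 1) :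
    IsUnimodular v :=
  ⟨-Pi.single (inl i) 1, by simp [symplecticForm, h]⟩

lemma IsUnimodular.mulVec {P : Matrix (l ⊕ l) (l ⊕ l) R} (hP : P ∈ symplecticGroup l R)
    {v : l ⊕ l → R} (hv : IsUnimodular v) : IsUnimodular (P *ᵥ v) := by
  obtain ⟨u, hu⟩ := hv
  exact ⟨P *ᵥ u, by rw [symplecticForm_mulVec hP, hu]⟩

end SymplecticForm

inductive EuclidStep : ℤ × ℤ → ℤ × ℤ → Prop
  | addLeft (a c k : ℤ) : EuclidStep (a, c) (a + k * c, c)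
  | addRight (a c k : ℤ) : EuclidStep (a, c) (a, c + k * a)

namespace EuclidStep

lemma reflTransGen_swap {p q : ℤ × ℤ} (h : ReflTransGen EuclidStep p q) :
    ReflTransGen EuclidStep p.swap q.swap :=
  h.lift Prod.swap fun _ _ hs => by
    cases hs with
    | addLeft a c k => exact addRight c a k
    | addRight a c k => exact addLeft c a k

lemma reflTransGen_addLeft {a c a' : ℤ} (k : ℤ) (h : a + k * c = a') :
    ReflTransGen EuclidStep (a, c) (a', c) :=
  h ▸ .single (addLeft a c k)

lemma reflTransGen_addRight {a c c' : ℤ} (k : ℤ) (h : c + k * a = c') :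
    ReflTransGen EuclidStep (a, c) (a, c') :=
  h ▸ .single (addRight a c k)

lemma reflTransGen_neg (a : ℤ) : ReflTransGen EuclidStep (a, 0) (-a, 0) :=
  (reflTransGen_addRight 1 (by ring)).trans <|
    (reflTransGen_addLeft (-2) (by ring)).trans (reflTransGen_addRight 1 (by ring))

theorem reflTransGen_gcd (a c : ℤ) : ReflTransGen EuclidStep (a, c) (Int.gcd a c, 0) := by
  induction h : c.natAbs using Nat.strong_induction_on generalizing a c with
  | _ n ih =>
  subst h
  rcases eq_or_ne c 0 with rfl | hc
  · rw [Int.gcd_zero_right, Int.natCast_natAbs]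
    rcases abs_choice a with ha | ha <;> rw [ha]
    exact reflTransGen_neg a
  · have hlt : (a % c).natAbs < c.natAbs := by
      have := Int.emod_lt a hc
      have := Int.emod_nonneg a hc
      omega
    have hrec := reflTransGen_swap (ih _ hlt c (a % c) rfl)
    rw [Int.gcd_comm, Int.gcd_emod] at hrec
    exact (reflTransGen_addLeft (-(a / c)) (by rw [Int.emod_def]; ring)).trans <| hrec.trans <|
      (reflTransGen_addLeft 1 (by ring)).trans (reflTransGen_addRight (-1) (by ring))

theorem reflTransGen_one_zero {a c : ℤ} (h : IsCoprime a c) :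
    ReflTransGen EuclidStep (a, c) (1, 0) := by
  simpa [Int.isCoprime_iff_gcd_eq_one.mp h] using reflTransGen_gcd a c

end EuclidStep

theorem Abelianization.of_surjective {G : Type*} [Group G] :
    Function.Surjective (Abelianization.of : G →* Abelianization G) :=
  QuotientGroup.mk_surjective

theorem Abelianization.card_le_card_of_surjective {G H : Type*} [Group G] [Group H] [Finite G]
    (f : G →* H) (hf : Function.Surjective f) :
    Nat.card (Abelianization H) ≤ Nat.card (Abelianization G) := by
  refine Nat.card_le_card_of_surjective (Abelianization.map f) fun z => ?_
  obtain ⟨h, rfl⟩ := of_surjective z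
  obtain ⟨g, rfl⟩ := hf h
  exact ⟨of g, map_of f g⟩

open Subgroup in
theorem IsPGroup.card_le_of_card_abelianization_le {p : ℕ} [hp : Fact p.Prime] {G : Type*}
    [Group G] [Finite G] (hG : IsPGroup p G) (hab : Nat.card (Abelianization G) ≤ p) :
    Nat.card G ≤ p := by
  induction h : Nat.card G using Nat.strong_induction_on generalizing G with
  | _ n ih =>
  subst h
  rcases subsingleton_or_nontrivial G with hG1 | hGnt
  · exact (Finite.card_le_one_iff_subsingleton.mpr hG1).trans hp.out.one_lt.le
  have hlt : Nat.card (G ⧸ center G) < Nat.card G := by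
    rw [← (center G).card_mul_index]
    have := Finite.one_lt_card_iff_nontrivial.mpr hG.center_nontrivial
    exact lt_mul_of_one_lt_left (Nat.pos_of_ne_zero index_ne_zero_of_finite) this
  have hcyc : IsCyclic (G ⧸ center G) := by
    have hle := ih _ hlt (hG.to_quotient _) ((Abelianization.card_le_card_of_surjective _
      (QuotientGroup.mk'_surjective _)).trans hab) rfl
    obtain ⟨m, hm⟩ := (hG.to_quotient (center G)).exists_card_eq
    refine isCyclic_of_card_dvd_prime (p := p) ?_
    rw [hm] at hle ⊢
    have hm1 : m ≤ 1 := (Nat.pow_le_pow_iff_right hp.out.one_lt).mp (by simpa using hle)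
    exact (pow_dvd_pow p hm1).trans (pow_one p).dvd
  have := isMulCommutative_of_isCyclic_quotient_center_self G
  have hbot : commutator G = ⊥ := by
    rw [commutator_eq_bot_iff_center_eq_top, center_eq_top]
  calc Nat.card G = Nat.card (Abelianization G) := by
        rw [← index_bot, ← hbot]; rfl
    _ ≤ p := hab

namespace Sp4

open EuclidStep

local notation "ℤ⁴" => Fin 2 ⊕ Fin 2 → ℤ
local notation "Sp₄" => symplecticGroup (Fin 2) ℤ

def vec4 (a b c d : ℤ) : ℤ⁴ := Sum.elim ![a, b] ![c, d]

@[simp] lemma vec4_inl_zero (a b c d : ℤ) : vec4 a b c d (inl 0) = a := rfl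
@[simp] lemma vec4_inl_one (a b c d : ℤ) : vec4 a b c d (inl 1) = b := rfl
@[simp] lemma vec4_inr_zero (a b c d : ℤ) : vec4 a b c d (inr 0) = c := rfl
@[simp] lemma vec4_inr_one (a b c d : ℤ) : vec4 a b c d (inr 1) = d := rfl

lemma vec4_eta (x : ℤ⁴) : vec4 (x (inl 0)) (x (inl 1)) (x (inr 0)) (x (inr 1)) = x := by
  ext (i | i) <;> fin_cases i <;> rfl

lemma vec4_add_smul (a b c d k a' b' c' d' : ℤ) :
    vec4 a b c d + k • vec4 a' b' c' d' =
      vec4 (a + k * a') (b + k * b') (c + k * c') (d + k * d') := by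
  ext (i | i) <;> fin_cases i <;> rfl

lemma symplecticForm_apply (x y : ℤ⁴) :
    ω x y = x (inl 0) * y (inr 0) + x (inl 1) * y (inr 1)
      - x (inr 0) * y (inl 0) - x (inr 1) * y (inl 1) := by
  simp only [symplecticForm, dotProduct, Fintype.sum_sum_type, Fin.sum_univ_two, J_mulVec_inl,
    J_mulVec_inr]
  ring

lemma symplecticForm_vec4 (a b c d a' b' c' d' : ℤ) :
    ω (vec4 a b c d) (vec4 a' b' c' d') = a * c' + b * d' - c * a' - d * b' := by
  simp [symplecticForm_apply]

def e₁ : ℤ⁴ := vec4 1 0 0 0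
def e₂ : ℤ⁴ := vec4 0 1 0 0
def f₁ : ℤ⁴ := vec4 0 0 1 0
def f₂ : ℤ⁴ := vec4 0 0 0 1

def transvectionSubgroup : Subgroup Sp₄ :=
  Subgroup.closure {symplecticTransvection v c | (v : ℤ⁴) (c : ℤ) (_ : IsUnimodular v)}

def Reach (F : Set ℤ⁴) (v w : ℤ⁴) : Prop :=
  ∃ P ∈ transvectionSubgroup, ↑P *ᵥ v = w ∧ ∀ f ∈ F, ↑P *ᵥ f = f

namespace Reach

variable {F : Set ℤ⁴} {u v w : ℤ⁴}

lemma refl (F : Set ℤ⁴) (v : ℤ⁴) : Reach F v v :=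
  ⟨1, one_mem _, one_mulVec v, fun f _ => one_mulVec f⟩

lemma trans (h₁ : Reach F u v) (h₂ : Reach F v w) : Reach F u w := by
  obtain ⟨P, hP, hPu, hPF⟩ := h₁
  obtain ⟨Q, hQ, hQv, hQF⟩ := h₂
  refine ⟨Q * P, mul_mem hQ hP, ?_, fun f hf => ?_⟩
  · rw [Submonoid.coe_mul, ← mulVec_mulVec, hPu, hQv]
  · rw [Submonoid.coe_mul, ← mulVec_mulVec, hPF f hf, hQF f hf]

lemma mono {F' : Set ℤ⁴} (hF : F' ⊆ F) (h : Reach F v w) : Reach F' v w := by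
  obtain ⟨P, hP, hPv, hPF⟩ := h
  exact ⟨P, hP, hPv, fun f hf => hPF f (hF hf)⟩

lemma isUnimodular (h : Reach F v w) (hv : IsUnimodular v) : IsUnimodular w := by
  obtain ⟨P, -, rfl, -⟩ := h
  exact hv.mulVec P.2

lemma of_transvection (hw : IsUnimodular w) (hF : ∀ f ∈ F, ω w f = 0) (k : ℤ)
    (h : v + (k * ω w v) • w = u) : Reach F v u := by
  refine ⟨symplecticTransvection w k, Subgroup.subset_closure ⟨w, k, hw, rfl⟩, ?_,
    fun f hf => ?_⟩
  · rwa [symplecticTransvection_mulVec]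
  · simp [symplecticTransvection_mulVec, hF f hf]

end Reach

lemma reach_of_euclid_fst {p q : ℤ × ℤ} (h : ReflTransGen EuclidStep p q) (b d : ℤ) :
    Reach ∅ (vec4 p.1 b p.2 d) (vec4 q.1 b q.2 d) := by
  induction h with
  | refl => exact .refl _ _
  | tail _ hs ih =>
    refine ih.trans ?_
    cases hs with
    | addLeft a c k =>
      refine .of_transvection (w := e₁) (isUnimodular_of_apply_inl_eq_one (i := 0) rfl)
        (by simp) k ?_
      rw [e₁, symplecticForm_vec4, vec4_add_smul]
      congr 1 <;> ring
    | addRight a c k =>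
      refine .of_transvection (w := f₁) (isUnimodular_of_apply_inr_eq_one (i := 0) rfl)
        (by simp) (-k) ?_
      rw [f₁, symplecticForm_vec4, vec4_add_smul]
      congr 1 <;> ring

lemma reach_of_euclid_snd {p q : ℤ × ℤ} (h : ReflTransGen EuclidStep p q) (a c : ℤ) :
    Reach {e₁, f₁} (vec4 a p.1 c p.2) (vec4 a q.1 c q.2) := by
  induction h with
  | refl => exact .refl _ _
  | tail _ hs ih =>
    refine ih.trans ?_
    cases hs with
    | addLeft b d k =>
      refine .of_transvection (w := e₂) (isUnimodular_of_apply_inl_eq_one (i := 1) rfl)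
        (by simp [e₁, f₁, e₂, symplecticForm_vec4]) k ?_
      rw [e₂, symplecticForm_vec4, vec4_add_smul]
      congr 1 <;> ring
    | addRight b d k =>
      refine .of_transvection (w := f₂) (isUnimodular_of_apply_inr_eq_one (i := 1) rfl)
        (by simp [e₁, f₁, f₂, symplecticForm_vec4]) (-k) ?_
      rw [f₂, symplecticForm_vec4, vec4_add_smul]
      congr 1 <;> ring

lemma reach_e₁ {v : ℤ⁴} (hv : IsUnimodular v) : Reach ∅ v e₁ := by
  rw [← vec4_eta v] at hv ⊢
  generalize v (inl 0) = a, v (inl 1) = b, v (inr 0) = c, v (inr 1) = d at hv ⊢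
  set g : ℤ := ↑(Int.gcd a c)
  set h : ℤ := ↑(Int.gcd b d)
  have h₁ : Reach ∅ (vec4 a b c d) (vec4 g h 0 0) :=
    (reach_of_euclid_fst (reflTransGen_gcd a c) b d).trans
      ((reach_of_euclid_snd (reflTransGen_gcd b d) g 0).mono (Set.empty_subset _))
  have hgh : IsCoprime g (g + h) := by
    obtain ⟨u, hu⟩ := h₁.isUnimodular hv
    rw [← vec4_eta u, symplecticForm_vec4] at hu
    exact ⟨u (inr 0) - u (inr 1), u (inr 1), by linear_combination hu⟩
  have h₂ : Reach ∅ (vec4 g h 0 0) (vec4 g h (g + h) (g + h)) := by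
    refine .of_transvection (w := vec4 0 0 1 1) (isUnimodular_of_apply_inr_eq_one (i := 0) rfl)
      (by simp) (-1) ?_
    rw [symplecticForm_vec4, vec4_add_smul]
    congr 1 <;> ring
  have h₃ : Reach ∅ (vec4 g h (g + h) (g + h)) (vec4 1 h 0 (g + h)) :=
    reach_of_euclid_fst (reflTransGen_one_zero hgh) h (g + h)
  set k : ℤ := ↑(Int.gcd h (g + h))
  have h₄ : Reach ∅ (vec4 1 h 0 (g + h)) (vec4 1 k 0 0) :=
    (reach_of_euclid_snd (reflTransGen_gcd h (g + h)) 1 0).mono (Set.empty_subset _)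
  have h₅ : Reach ∅ (vec4 1 k 0 0) (vec4 1 0 (-k) 0) := by
    refine .of_transvection (w := vec4 0 1 1 0) (isUnimodular_of_apply_inl_eq_one (i := 1) rfl)
      (by simp) k ?_
    rw [symplecticForm_vec4, vec4_add_smul]
    congr 1 <;> ring
  have h₆ : Reach ∅ (vec4 1 0 (-k) 0) e₁ := by
    refine .of_transvection (w := f₁) (isUnimodular_of_apply_inr_eq_one (i := 0) rfl)
      (by simp) (-k) ?_
    rw [f₁, e₁, symplecticForm_vec4, vec4_add_smul]
    congr 1 <;> ring
  exact h₁.trans <| h₂.trans <| h₃.trans <| h₄.trans <| h₅.trans h₆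

lemma reach_f₁ {v : ℤ⁴} (hv : v (inr 0) = 1) : Reach {e₁} v f₁ := by
  rw [← vec4_eta v, hv]
  generalize v (inl 0) = a, v (inl 1) = b, v (inr 1) = d
  set k : ℤ := ↑(Int.gcd b d)
  have h₁ : Reach {e₁} (vec4 a b 1 d) (vec4 a k 1 0) :=
    (reach_of_euclid_snd (reflTransGen_gcd b d) a 1).mono (by simp)
  have h₂ : Reach {e₁} (vec4 a k 1 0) (vec4 (a - k) 0 1 0) := by
    refine .of_transvection (w := vec4 1 1 0 0) (isUnimodular_of_apply_inl_eq_one (i := 0) rfl)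
      (by simp [e₁, symplecticForm_vec4]) (-k) ?_
    rw [symplecticForm_vec4, vec4_add_smul]
    congr 1 <;> ring
  have h₃ : Reach {e₁} (vec4 (a - k) 0 1 0) f₁ := by
    refine .of_transvection (w := e₁) (isUnimodular_of_apply_inl_eq_one (i := 0) rfl)
      (by simp [e₁, symplecticForm_vec4]) (k - a) ?_
    rw [f₁, e₁, symplecticForm_vec4, vec4_add_smul]
    congr 1 <;> ring
  exact h₁.trans <| h₂.trans h₃

lemma reach_e₂ {v : ℤ⁴} (h₁ : v (inl 0) = 0) (h₂ : v (inr 0) = 0)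
    (hv : IsCoprime (v (inl 1)) (v (inr 1))) : Reach {e₁, f₁} v e₂ := by
  rw [← vec4_eta v, h₁, h₂]
  exact reach_of_euclid_snd (reflTransGen_one_zero hv) 0 0

lemma reach_f₂ {v : ℤ⁴} (h₁ : v (inl 0) = 0) (h₂ : v (inr 0) = 0) (h₃ : v (inr 1) = 1) :
    Reach {e₁, f₁, e₂} v f₂ := by
  rw [← vec4_eta v, h₁, h₂, h₃]
  refine .of_transvection (w := e₂) (isUnimodular_of_apply_inl_eq_one (i := 1) rfl)
    (by simp [e₁, f₁, e₂, symplecticForm_vec4]) (-v (inl 1)) ?_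
  rw [e₂, f₂, symplecticForm_vec4, vec4_add_smul]
  congr 1 <;> ring

lemma mem_transvectionSubgroup_of_reach {F : Set ℤ⁴} {x : ℤ⁴}
    (hnext : ∀ N : Sp₄, ↑N *ᵥ x = x → (∀ f ∈ F, ↑N *ᵥ f = f) → N ∈ transvectionSubgroup)
    {M : Sp₄} (hM : ∀ f ∈ F, ↑M *ᵥ f = f) (hx : Reach F (↑M *ᵥ x) x) :
    M ∈ transvectionSubgroup := by
  obtain ⟨P, hP, hPx, hPF⟩ := hx
  refine (transvectionSubgroup.mul_mem_cancel_left hP).mp (hnext _ ?_ fun f hf => ?_)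
  · rw [Submonoid.coe_mul, ← mulVec_mulVec, hPx]
  · rw [Submonoid.coe_mul, ← mulVec_mulVec, hM f hf, hPF f hf]

lemma symplecticForm_mulVec_of_mulVec_eq {M : Sp₄} {f : ℤ⁴} (hf : ↑M *ᵥ f = f) (x : ℤ⁴) :
    ω f (↑M *ᵥ x) = ω f x := by
  conv_lhs => rw [← hf]
  exact symplecticForm_mulVec M.2 f x

lemma eq_one_of_mulVec_eq {N : Sp₄} (h₁ : ↑N *ᵥ e₁ = e₁) (h₂ : ↑N *ᵥ e₂ = e₂)
    (h₃ : ↑N *ᵥ f₁ = f₁) (h₄ : ↑N *ᵥ f₂ = f₂) : N = 1 := by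
  refine Subtype.ext (ext_of_mulVec_single ?_)
  simp only [Submonoid.coe_one, one_mulVec, Sum.forall, Fin.forall_fin_two]
  refine ⟨⟨?_, ?_⟩, ?_, ?_⟩
  · rwa [show Pi.single (inl 0) (1 : ℤ) = e₁ by decide]
  · rwa [show Pi.single (inl 1) (1 : ℤ) = e₂ by decide]
  · rwa [show Pi.single (inr 0) (1 : ℤ) = f₁ by decide]
  · rwa [show Pi.single (inr 1) (1 : ℤ) = f₂ by decide]

lemma mem_transvectionSubgroup_of_fixes_e₁_f₁_e₂ {M : Sp₄} (h₁ : ↑M *ᵥ e₁ = e₁)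
    (h₂ : ↑M *ᵥ f₁ = f₁) (h₃ : ↑M *ᵥ e₂ = e₂) : M ∈ transvectionSubgroup := by
  refine mem_transvectionSubgroup_of_reach (F := {e₁, f₁, e₂}) (x := f₂) (fun N h₄ hN => ?_)
    (by simp [h₁, h₂, h₃]) (reach_f₂ ?_ ?_ ?_)
  · rw [eq_one_of_mulVec_eq (hN e₁ (by simp)) (hN e₂ (by simp)) (hN f₁ (by simp)) h₄]
    exact one_mem _
  · simpa [symplecticForm_apply, f₁, f₂] using symplecticForm_mulVec_of_mulVec_eq h₂ f₂
  · simpa [symplecticForm_apply, e₁, f₂] using symplecticForm_mulVec_of_mulVec_eq h₁ f₂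
  · simpa [symplecticForm_apply, e₂, f₂] using symplecticForm_mulVec_of_mulVec_eq h₃ f₂

lemma mem_transvectionSubgroup_of_fixes_e₁_f₁ {M : Sp₄} (h₁ : ↑M *ᵥ e₁ = e₁)
    (h₂ : ↑M *ᵥ f₁ = f₁) : M ∈ transvectionSubgroup := by
  have hv₁ : (↑M *ᵥ e₂ : ℤ⁴) (inl 0) = 0 := by
    simpa [symplecticForm_apply, f₁, e₂] using symplecticForm_mulVec_of_mulVec_eq h₂ e₂
  have hv₂ : (↑M *ᵥ e₂ : ℤ⁴) (inr 0) = 0 := by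
    simpa [symplecticForm_apply, e₁, e₂] using symplecticForm_mulVec_of_mulVec_eq h₁ e₂
  have hv : IsCoprime ((↑M *ᵥ e₂ : ℤ⁴) (inl 1)) ((↑M *ᵥ e₂ : ℤ⁴) (inr 1)) := by
    have h : ω (↑M *ᵥ e₂ : ℤ⁴) (↑M *ᵥ f₂) = 1 := by rw [symplecticForm_mulVec M.2]; decide
    rw [symplecticForm_apply, hv₁, hv₂] at h
    exact ⟨(↑M *ᵥ f₂ : ℤ⁴) (inr 1), -(↑M *ᵥ f₂ : ℤ⁴) (inl 1), by linear_combination h⟩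
  refine mem_transvectionSubgroup_of_reach (F := {e₁, f₁}) (x := e₂)
    (fun N h₃ hN => mem_transvectionSubgroup_of_fixes_e₁_f₁_e₂ (hN e₁ (by simp))
      (hN f₁ (by simp)) h₃) (by simp [h₁, h₂]) (reach_e₂ hv₁ hv₂ hv)

lemma mem_transvectionSubgroup_of_fixes_e₁ {M : Sp₄} (h₁ : ↑M *ᵥ e₁ = e₁) :
    M ∈ transvectionSubgroup :=
  mem_transvectionSubgroup_of_reach (F := {e₁}) (x := f₁)
    (fun N h₂ hN => mem_transvectionSubgroup_of_fixes_e₁_f₁ (hN e₁ rfl) h₂) (by simp [h₁])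
    (reach_f₁ (by simpa [symplecticForm_apply, e₁, f₁] using
      symplecticForm_mulVec_of_mulVec_eq h₁ f₁))

theorem transvectionSubgroup_eq_top : transvectionSubgroup = ⊤ := by
  refine eq_top_iff.mpr fun M _ => mem_transvectionSubgroup_of_reach (F := ∅) (x := e₁)
    (fun N h₁ _ => mem_transvectionSubgroup_of_fixes_e₁ h₁) (by simp) (reach_e₁ ?_)
  exact ⟨↑M *ᵥ f₁, by rw [symplecticForm_mulVec M.2]; decide⟩

lemma exists_mulVec_eq_e₁ {v : ℤ⁴} (hv : IsUnimodular v) : ∃ P : Sp₄, ↑P *ᵥ v = e₁ := by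
  obtain ⟨P, -, hP, -⟩ := reach_e₁ hv
  exact ⟨P, hP⟩

lemma map_symplecticTransvection {A : Type*} [CommGroup A] (χ : Sp₄ →* A) {v : ℤ⁴}
    (hv : IsUnimodular v) (c : ℤ) :
    χ (symplecticTransvection v c) = χ (symplecticTransvection e₁ 1) ^ c := by
  obtain ⟨P, hP⟩ := exists_mulVec_eq_e₁ hv
  have hc : symplecticTransvection e₁ c = symplecticTransvection e₁ 1 ^ c := by
    simpa using symplecticTransvection_intCast e₁ c
  have h := congrArg χ (symplecticTransvection_conj P v c)
  rwa [hP, hc, map_mul, map_mul, mul_right_comm, map_inv, mul_inv_cancel, one_mul,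
    map_zpow] at h

lemma range_le_zpowers {A : Type*} [CommGroup A] (χ : Sp₄ →* A) :
    χ.range ≤ Subgroup.zpowers (χ (symplecticTransvection e₁ 1)) := by
  rw [MonoidHom.range_eq_map, ← transvectionSubgroup_eq_top, transvectionSubgroup,
    MonoidHom.map_closure, Subgroup.closure_le]
  rintro _ ⟨_, ⟨v, c, hv, rfl⟩, rfl⟩
  exact ⟨c, (map_symplecticTransvection χ hv c).symm⟩

/-- The chain relation of the genus-two mapping class group, read in `Sp(4,ℤ)`: the five vectors
are the homology classes of a chain of simple closed curves, consecutive ones meeting once. -/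
theorem chain_relation :
    (symplecticTransvection e₁ 1 * symplecticTransvection f₁ 1 *
      symplecticTransvection (vec4 1 1 0 0) 1 * symplecticTransvection f₂ 1 *
      symplecticTransvection e₂ 1) ^ 6 = (1 : Sp₄) := by
  apply Subtype.ext
  simp only [SubmonoidClass.coe_pow, Submonoid.coe_mul, symplecticTransvection,
    Submonoid.coe_one]
  decide

theorem card_range_dvd_thirty {A : Type*} [CommGroup A] (χ : Sp₄ →* A) :
    Nat.card χ.range ∣ 30 := by
  have hy : χ (symplecticTransvection e₁ 1) ^ 30 = 1 := by
    have h := congrArg χ chain_relation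
    rw [map_pow, map_mul, map_mul, map_mul, map_mul, map_one,
      map_symplecticTransvection χ (v := f₁) (isUnimodular_of_apply_inr_eq_one (i := 0) rfl),
      map_symplecticTransvection χ (v := vec4 1 1 0 0)
        (isUnimodular_of_apply_inl_eq_one (i := 0) rfl),
      map_symplecticTransvection χ (v := f₂) (isUnimodular_of_apply_inr_eq_one (i := 1) rfl),
      map_symplecticTransvection χ (v := e₂)
        (isUnimodular_of_apply_inl_eq_one (i := 1) rfl)] at h
    rw [← h]
    simp only [zpow_one, ← pow_two, ← pow_succ, ← pow_mul]
  calc Nat.card χ.range ∣ Nat.card (Subgroup.zpowers (χ (symplecticTransvection e₁ 1))) :=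
        Subgroup.card_dvd_of_le (range_le_zpowers χ)
    _ = orderOf (χ (symplecticTransvection e₁ 1)) := Nat.card_zpowers _
    _ ∣ 30 := orderOf_dvd_of_pow_eq_one hy

theorem card_range_le_two {Q : Type*} [Group Q] [Finite Q] (hQ : IsPGroup 2 Q)
    (φ : Sp₄ →* Q) : Nat.card φ.range ≤ 2 := by
  have hR := hQ.to_subgroup φ.range
  refine hR.card_le_of_card_abelianization_le ?_
  have hψ : Function.Surjective (Abelianization.of.comp φ.rangeRestrict) :=
    Abelianization.of_surjective.comp φ.rangeRestrict_surjective
  have h30 := card_range_dvd_thirty (Abelianization.of.comp φ.rangeRestrict)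
  rw [MonoidHom.range_eq_top.mpr hψ, Subgroup.card_top] at h30
  obtain ⟨m, hm⟩ := (hR.of_surjective _ Abelianization.of_surjective).exists_card_eq
  rw [hm] at h30 ⊢
  have h2 : 2 ^ m ∣ 2 :=
    (Nat.Coprime.pow_left m (by norm_num : Nat.Coprime 2 15)).dvd_of_dvd_mul_right h30
  exact Nat.le_of_dvd two_pos h2

end Sp4

/-- Every homomorphism from `Sp(4,ℤ)` to a finite group of 2-power order has
image of cardinality at most 2; in particular, the only nontrivial finite
2-group onto which `Sp(4,ℤ)` surjects is `ℤ/2ℤ`. -/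
theorem sp4Z_to_two_group (Q : Type*) [Group Q] [Finite Q]
    (hQ : ∃ k : ℕ, Nat.card Q = 2 ^ k) :
    (∀ φ : Matrix.symplecticGroup (Fin 2) ℤ →* Q, Nat.card φ.range ≤ 2) ∧
    (∀ φ : Matrix.symplecticGroup (Fin 2) ℤ →* Q, Function.Surjective φ →
      Nontrivial Q → Nonempty (Q ≃* Multiplicative (ZMod 2))) := by
  obtain ⟨k, hk⟩ := hQ
  have hle := Sp4.card_range_le_two (IsPGroup.of_card hk)
  refine ⟨hle, fun φ hφ hnt => ?_⟩
  have hcard : Nat.card Q = 2 := by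
    have h := hle φ
    rw [MonoidHom.range_eq_top.mpr hφ, Subgroup.card_top] at h
    have := Finite.one_lt_card_iff_nontrivial.mpr hnt
    omega
  exact ⟨mulEquivOfPrimeCardEq hcard (by simp)⟩
end

section
/- Let G₁, …, G_k be groups (k ≥ 1) and for each i let t_i ∈ G_i be an element not lying in the center of G_i. Suppose that for each i, every quotient of G_i/Z(G_i) by a nontrivial normal subgroup is a solvable group. If f : G₁ × ⋯ × G_k → Q is a surjective group homomorphism with f(t₁, …, t_k) = 1, then Q is solvable. -/
/-!
Write `π : ∏ Gᵢ → Q ⧸ Z(Q)` for `f` followed by the quotient map. Since `f t = 1`, the image of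
the `i`-th coordinate of `t` is the inverse of the image of the remaining coordinates, so it
commutes with the images of both `Gᵢ` and of the other factors: it is central in `Q`. Hence the
part `Lᵢ` of `ker π` lying in `Gᵢ` contains `Z(Gᵢ)` and the noncentral `tᵢ`, so `Gᵢ ⧸ Lᵢ` is a
quotient of `Gᵢ ⧸ Z(Gᵢ)` by a nontrivial normal subgroup and is solvable. As `ker π` contains
`∏ Lᵢ`, the group `Q ⧸ Z(Q)` is a quotient of the solvable group `∏ (Gᵢ ⧸ Lᵢ)`, and a central
extension of a solvable group is solvable.
-/

open Subgroup

theorem MonoidHom.map_mem_center_of_surjective {G Q : Type*} [Group G] [Group Q] {f : G →* Q}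
    (hf : Function.Surjective f) {z : G} (hz : z ∈ center G) : f z ∈ center Q :=
  mem_center_iff.2 fun q => by
    obtain ⟨g, rfl⟩ := hf q
    rw [← map_mul, ← map_mul, mem_center_iff.1 hz g]

section Pi

variable {ι : Type*} {G : ι → Type*} [∀ i, Group (G i)]

theorem Pi.mulSingle_mem_center [DecidableEq ι] {i : ι} {z : G i} (hz : z ∈ center (G i)) :
    Pi.mulSingle i z ∈ center (∀ i, G i) := by
  rw [Subgroup.center_pi]
  exact (mulSingle_mem_pi i z).2 fun _ => hz

theorem Pi.commute_mulSingle_update_one [DecidableEq ι] (i : ι) (x : G i) (g : ∀ j, G j) :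
    Commute (Pi.mulSingle i x) (Function.update g i 1) := by
  funext j
  by_cases h : j = i
  · subst h; simp
  · simp [h]

theorem Pi.mulSingle_mul_update_one [DecidableEq ι] (g : ∀ j, G j) (i : ι) :
    Pi.mulSingle i (g i) * Function.update g i 1 = g := by
  funext j
  by_cases h : j = i
  · subst h; simp
  · simp [h]

theorem MonoidHom.map_mulSingle_mem_center [DecidableEq ι] {Q : Type*} [Group Q]
    {f : (∀ i, G i) →* Q} (hf : Function.Surjective f) {t : ∀ i, G i} (ht : f t = 1) (i : ι) :
    f (Pi.mulSingle i (t i)) ∈ center Q := by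
  have hinv : f (Pi.mulSingle i (t i)) = (f (Function.update t i 1))⁻¹ := by
    rw [eq_inv_iff_mul_eq_one, ← map_mul, Pi.mulSingle_mul_update_one, ht]
  refine mem_center_iff.2 fun q => ?_
  obtain ⟨g, rfl⟩ := hf q
  have hcomm : Commute (f (Pi.mulSingle i (t i))) (f g) := by
    rw [← Pi.mulSingle_mul_update_one g i, map_mul]
    refine .mul_right ?_ ((Pi.commute_mulSingle_update_one i (t i) g).map f)
    rw [hinv]
    exact ((Pi.commute_mulSingle_update_one i (g i) t).symm.map f).inv_left
  exact hcomm.eq.symm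

end Pi

namespace Group

theorem isSolvable_of_ker_le_ker {A B C : Type*} [Group A] [Group B] [Group C]
    (φ : A →* B) [IsSolvable B] {ψ : A →* C} (hψ : Function.Surjective ψ) (h : φ.ker ≤ ψ.ker) :
    IsSolvable C :=
  have : IsSolvable (A ⧸ φ.ker) :=
    isSolvable_of_isSolvable_injective (QuotientGroup.kerLift_injective φ)
  isSolvable_of_surjective (f := QuotientGroup.lift φ.ker ψ h) fun c =>
    let ⟨a, ha⟩ := hψ c
    ⟨a, ha⟩

theorem isSolvable_of_isSolvable_quotient_center {G : Type*} [Group G]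
    [IsSolvable (G ⧸ center G)] : IsSolvable G :=
  (isSolvable_iff_subgroup_quotient (center G)).2
    ⟨isSolvable_of_comm fun a b => Subtype.ext (mem_center_iff.1 b.2 a), inferInstance⟩

theorem isSolvable_quotient_of_center_lt {G : Type*} [Group G]
    (hsolv : ∀ (N : Subgroup (G ⧸ center G)) [N.Normal], N ≠ ⊥ → IsSolvable ((G ⧸ center G) ⧸ N))
    (L : Subgroup G) [L.Normal] (hL : center G < L) : IsSolvable (G ⧸ L) := by
  obtain ⟨t, htL, ht⟩ := SetLike.exists_of_lt hL
  have : (L.map (QuotientGroup.mk' (center G))).Normal :=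
    Normal.map inferInstance _ (QuotientGroup.mk'_surjective _)
  have hne : L.map (QuotientGroup.mk' (center G)) ≠ ⊥ := fun h =>
    ht <| (QuotientGroup.eq_one_iff t).1 <| (mem_bot.1 (h ▸ mem_map_of_mem _ htL))
  have := hsolv _ hne
  exact isSolvable_of_surjective (QuotientGroup.quotientQuotientEquivQuotient _ L hL.le).surjective

section Pi

variable {ι : Type*} {G : ι → Type*} [∀ i, Group (G i)]

instance isSolvable_pi [Finite ι] [∀ i, IsSolvable (G i)] : IsSolvable (∀ i, G i) := by
  choose n hn using fun i => (IsSolvable.solvable : ∃ n, derivedSeries (G i) n = ⊥)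
  obtain ⟨m, hm⟩ := (Set.finite_range n).bddAbove
  refine ⟨m, (Subgroup.eq_bot_iff_forall _).2 fun g hg => funext fun i => mem_bot.1 ?_⟩
  have hgi : g i ∈ derivedSeries (G i) m :=
    map_derivedSeries_le_derivedSeries (Pi.evalMonoidHom G i) m ⟨g, hg, rfl⟩
  rw [← hn i]
  exact derivedSeries_antitone _ (hm ⟨i, rfl⟩) hgi

theorem isSolvable_of_surjective_pi [Finite ι] [DecidableEq ι] {C : Type*} [Group C]
    {ψ : (∀ i, G i) →* C} (hψ : Function.Surjective ψ)
    [∀ i, IsSolvable (G i ⧸ (ψ.comp (MonoidHom.mulSingle G i)).ker)] : IsSolvable C := by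
  refine isSolvable_of_ker_le_ker
    (MonoidHom.pi fun i =>
      (QuotientGroup.mk' (ψ.comp (MonoidHom.mulSingle G i)).ker).comp (Pi.evalMonoidHom G i))
    hψ fun g hg => ?_
  refine pi_mem_of_mulSingle_mem g fun i => ?_
  have hgi : (QuotientGroup.mk' _) (g i) = 1 := congrFun hg i
  rwa [QuotientGroup.mk'_apply, QuotientGroup.eq_one_iff] at hgi

end Pi

end Group

theorem solvable_quotient_of_product_general (k : ℕ)
    (G : Fin k → Type*) [∀ i, Group (G i)]
    (t : ∀ i, G i) (ht : ∀ i, t i ∉ Subgroup.center (G i))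
    (hsolv : ∀ (i : Fin k)
      (N : Subgroup ((G i) ⧸ Subgroup.center (G i))) [N.Normal], N ≠ ⊥ →
      IsSolvable (((G i) ⧸ Subgroup.center (G i)) ⧸ N))
    (Q : Type*) [Group Q] (f : (∀ i, G i) →* Q)
    (hf : Function.Surjective f) (h1 : f t = 1) :
    IsSolvable Q := by
  let π := (QuotientGroup.mk' (center Q)).comp f
  have hπ : Function.Surjective π := (QuotientGroup.mk'_surjective _).comp hf
  have hker (i : Fin k) (z : G i) :
      z ∈ (π.comp (MonoidHom.mulSingle G i)).ker ↔ f (Pi.mulSingle i z) ∈ center Q :=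
    QuotientGroup.eq_one_iff _
  have hcenter_lt (i : Fin k) : center (G i) < (π.comp (MonoidHom.mulSingle G i)).ker :=
    lt_of_le_not_ge
      (fun z hz => (hker i z).2 (f.map_mem_center_of_surjective hf (Pi.mulSingle_mem_center hz)))
      (fun h => ht i (h ((hker i _).2 (f.map_mulSingle_mem_center hf h1 i))))
  have := fun i => Group.isSolvable_quotient_of_center_lt (hsolv i) _ (hcenter_lt i)
  have : Group.IsSolvable (Q ⧸ center Q) := Group.isSolvable_of_surjective_pi hπ
  exact Group.isSolvable_of_isSolvable_quotient_center

/-- Let `G₁, …, G_k` (`k ≥ 1`) be groups, and `t i ∈ G i` noncentral elements.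
Suppose every quotient of `G i ⧸ Z(G i)` by a nontrivial normal subgroup is
solvable. If `f : G₁ × ⋯ × G_k → Q` is a surjective homomorphism killing
`(t₁, …, t_k)`, then `Q` is solvable. -/
theorem solvable_quotient_of_product (k : ℕ) (hk : 1 ≤ k)
    (G : Fin k → Type*) [∀ i, Group (G i)]
    (t : ∀ i, G i) (ht : ∀ i, t i ∉ Subgroup.center (G i))
    (hsolv : ∀ (i : Fin k)
      (N : Subgroup ((G i) ⧸ Subgroup.center (G i))) [N.Normal], N ≠ ⊥ →
      IsSolvable (((G i) ⧸ Subgroup.center (G i)) ⧸ N))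
    (Q : Type*) [Group Q] (f : (∀ i, G i) →* Q)
    (hf : Function.Surjective f) (h1 : f t = 1) :
    IsSolvable Q :=
  solvable_quotient_of_product_general k G t ht hsolv Q f hf h1
end
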